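/- Assume n ≥ 2 and let (Mᵢ, φ_{ij}) be descent data over (S,(Sᵢ)). Then the product of the maps φ_{ni} (i = 1,…,n−1) restricts to a well-defined S-linear isomorphism from the submodule {(pᵢ)_{i<n} ∈ ∏_{i=1}^{n-1} Mₙ/(IᵢMₙ) : for all i ≠ j < n, the images of pᵢ and pⱼ in Mₙ/((Iᵢ+Iⱼ)Mₙ) coincide} onto the submodule {(qᵢ)_{i<n} ∈ ∏_{i=1}^{n-1} Mᵢ/(IₙMᵢ) : for all i ≠ j < n, the map induced by φ_{ij} on quotients by (Iⱼ+Iₙ) sends the image of qᵢ in Mᵢ/((Iⱼ+Iₙ)Mᵢ) to the image of qⱼ in Mⱼ/((Iᵢ+Iₙ)Mⱼ)}. Well-definedness follows from the cocycle condition. -/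

import Mathlib

set_option maxHeartbeats 1000000
set_option synthInstance.maxHeartbeats 400000

open MvPolynomial TensorProduct

/-- The principal ideal `(x₁ ⋯ xₙ)` in `k[x₁,…,xₙ]`. -/
noncomputable abbrev sncIdeal (k : Type) [Field k] (n : ℕ) : Ideal (MvPolynomial (Fin n) k) :=
  Ideal.span {∏ i : Fin n, (X i : MvPolynomial (Fin n) k)}

/-- The simple normal crossings model `R = k[x₁,…,xₙ]/(x₁⋯xₙ)`. -/
abbrev SNCModel (k : Type) [Field k] (n : ℕ) : Type :=
  MvPolynomial (Fin n) k ⧸ sncIdeal k n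

/-- For an algebra `S` over the simple normal crossings model, the ideal `Iᵢ ⊆ S`
generated by the image of `xᵢ`. -/
def xIdeal (k : Type) [Field k] (n : ℕ) (S : Type) [CommRing S]
    [Algebra (SNCModel k n) S] (i : Fin n) : Ideal S :=
  Ideal.span {algebraMap (SNCModel k n) S (Ideal.Quotient.mk (sncIdeal k n) (X i))}

/-- The natural map `M ⧸ p → M ⧸ q` for submodules `p ≤ q`. -/
def qfactor {S : Type*} [CommRing S] {M : Type*} [AddCommGroup M] [Module S M]
    {p q : Submodule S M} (h : p ≤ q) : (M ⧸ p) →ₗ[S] M ⧸ q :=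
  Submodule.mapQ p q LinearMap.id fun _ hx => h hx

/-- In a quotient `B ⧸ (J • ⊤)`, every element of `I ≤ J` acts by zero. -/
lemma smul_quot_top_eq_zero {S : Type*} [CommRing S] {B : Type*} [AddCommGroup B]
    [Module S B] {I J : Ideal S} (h : I ≤ J) {r : S} (hr : r ∈ I)
    (z : B ⧸ (J • (⊤ : Submodule S B))) : r • z = 0 := by
  obtain ⟨y, rfl⟩ := Submodule.Quotient.mk_surjective _ z
  rw [← Submodule.Quotient.mk_smul, Submodule.Quotient.mk_eq_zero]
  exact Submodule.smul_mem_smul (h hr) Submodule.mem_top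

section Hierarchical

variable (k : Type) [Field k] (m : ℕ) (S : Type) [CommRing S]
  [Algebra (SNCModel k (m + 1)) S]
variable (M : Fin (m + 1) → Type) [∀ i, AddCommGroup (M i)] [∀ i, Module S (M i)]
variable (φ : ∀ i j : Fin (m + 1), i ≠ j →
  ((M i ⧸ xIdeal k (m + 1) S j • (⊤ : Submodule S (M i))) ≃ₗ[S]
    (M j ⧸ xIdeal k (m + 1) S i • (⊤ : Submodule S (M j)))))

/-- The map `Mᵢ/(I_l Mᵢ) → Mⱼ/((Iᵢ+I_l)Mⱼ)` induced by `φ_{ij} : Mᵢ/(IⱼMᵢ) → Mⱼ/(IᵢMⱼ)`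
on quotients. -/
def glueMap (i j : Fin (m + 1)) (h : i ≠ j) (l : Fin (m + 1)) :
    (M i ⧸ xIdeal k (m + 1) S l • (⊤ : Submodule S (M i))) →ₗ[S]
      (M j ⧸ (xIdeal k (m + 1) S i ⊔ xIdeal k (m + 1) S l) • (⊤ : Submodule S (M j))) :=
  Submodule.liftQ (xIdeal k (m + 1) S l • (⊤ : Submodule S (M i)))
    ((qfactor (Submodule.smul_mono_left
        (le_sup_left : xIdeal k (m + 1) S i ≤ xIdeal k (m + 1) S i ⊔ xIdeal k (m + 1) S l))).comp
      ((φ i j h).toLinearMap.comp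
        (Submodule.mkQ (xIdeal k (m + 1) S j • (⊤ : Submodule S (M i))))))
    (by
      rw [Submodule.smul_le]
      intro r hr x _
      rw [LinearMap.mem_ker, map_smul]
      exact smul_quot_top_eq_zero
        (le_sup_right : xIdeal k (m + 1) S l ≤ xIdeal k (m + 1) S i ⊔ xIdeal k (m + 1) S l)
        hr _)

/-- The submodule of compatible tuples in `∏_{i<n} Mₙ/(IᵢMₙ)`. -/
def psiTwoSource : Submodule S
    (∀ i : Fin m, M (Fin.last m) ⧸
      xIdeal k (m + 1) S i.castSucc • (⊤ : Submodule S (M (Fin.last m)))) :=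
  ⨅ (i : Fin m) (j : Fin m) (_ : i ≠ j),
    LinearMap.eqLocus
      ((qfactor (Submodule.smul_mono_left
          (le_sup_left : xIdeal k (m + 1) S i.castSucc ≤
            xIdeal k (m + 1) S i.castSucc ⊔ xIdeal k (m + 1) S j.castSucc))).comp
        (LinearMap.proj i))
      ((qfactor (Submodule.smul_mono_left
          (le_sup_right : xIdeal k (m + 1) S j.castSucc ≤
            xIdeal k (m + 1) S i.castSucc ⊔ xIdeal k (m + 1) S j.castSucc))).comp
        (LinearMap.proj j))

/-- The submodule of `φ`-compatible tuples in `∏_{i<n} Mᵢ/(IₙMᵢ)`. -/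
def psiTwoTarget : Submodule S
    (∀ i : Fin m, M i.castSucc ⧸
      xIdeal k (m + 1) S (Fin.last m) • (⊤ : Submodule S (M i.castSucc))) :=
  ⨅ (i : Fin m) (j : Fin m) (h : i ≠ j),
    LinearMap.eqLocus
      ((glueMap k m S M φ i.castSucc j.castSucc ((Fin.castSucc_injective m).ne h)
          (Fin.last m)).comp (LinearMap.proj i))
      ((qfactor (Submodule.smul_mono_left
          (le_sup_right : xIdeal k (m + 1) S (Fin.last m) ≤
            xIdeal k (m + 1) S i.castSucc ⊔ xIdeal k (m + 1) S (Fin.last m)))).comp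
        (LinearMap.proj j))

/-- The product of the maps `φ_{ni} : Mₙ/(IᵢMₙ) → Mᵢ/(IₙMᵢ)`. -/
def psiTwo :
    (∀ i : Fin m, M (Fin.last m) ⧸
        xIdeal k (m + 1) S i.castSucc • (⊤ : Submodule S (M (Fin.last m)))) →ₗ[S]
      ∀ i : Fin m, M i.castSucc ⧸
        xIdeal k (m + 1) S (Fin.last m) • (⊤ : Submodule S (M i.castSucc)) :=
  LinearMap.pi fun i : Fin m =>
    (φ (Fin.last m) i.castSucc (Fin.castSucc_lt_last i).ne').toLinearMap.comp
      (LinearMap.proj i)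

end Hierarchical

/-
Each `φ_{ni}` is an isomorphism, so the product map is a bijection of the ambient products, and it
suffices to show that, for `i ≠ j`, a tuple `p` is compatible at `(i, j)` iff `(φ_{ni} pᵢ)ᵢ` is.
Lift `pᵢ, pⱼ` to `xᵢ, xⱼ ∈ Mₙ`. Since `φ_{nj}` is an isomorphism `Mₙ/IⱼMₙ ≅ Mⱼ/IₙMⱼ`, it induces an
isomorphism `Mₙ/(Iᵢ+Iⱼ)Mₙ ≅ Mⱼ/(Iᵢ+Iₙ)Mⱼ`, so `xᵢ ≡ xⱼ` there iff `φ_{nj}(xᵢ) ≡ φ_{nj}(pⱼ)` mod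
`Iᵢ+Iₙ`. The cocycle condition for `(n, i, j)` replaces `φ_{nj}(xᵢ)` by `φ_{ij}(φ_{ni}(pᵢ))`,
which is the target condition.
-/

section SmulTop

variable {S : Type*} [CommRing S] {M N : Type*} [AddCommGroup M] [Module S M]
  [AddCommGroup N] [Module S N]

lemma qfactor_mk {p q : Submodule S M} (h : p ≤ q) (x : M) :
    qfactor h (Submodule.Quotient.mk x) = Submodule.Quotient.mk x := rfl

lemma Submodule.mk_mem_smul_top_iff (I J : Ideal S) (x : M) :
    (Submodule.Quotient.mk x : M ⧸ J • (⊤ : Submodule S M)) ∈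
        I • (⊤ : Submodule S (M ⧸ J • (⊤ : Submodule S M))) ↔
      x ∈ (I ⊔ J) • (⊤ : Submodule S M) := by
  have hmap : (I • ⊤ : Submodule S M).map (J • ⊤ : Submodule S M).mkQ =
      I • (⊤ : Submodule S (M ⧸ J • (⊤ : Submodule S M))) := by
    rw [Submodule.map_smul'', Submodule.map_top, Submodule.range_mkQ]
  rw [← hmap, ← Submodule.mkQ_apply, ← Submodule.mem_comap, Submodule.comap_map_mkQ,
    Submodule.sup_smul, sup_comm]

lemma LinearEquiv.map_mem_smul_top_iff (e : M ≃ₗ[S] N) (I : Ideal S) (z : M) :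
    e z ∈ I • (⊤ : Submodule S N) ↔ z ∈ I • (⊤ : Submodule S M) := by
  have hmap : (I • ⊤ : Submodule S M).map (e : M →ₗ[S] N) = I • ⊤ := by
    rw [Submodule.map_smul'', Submodule.map_top, LinearEquiv.range]
  rw [← hmap, Submodule.mem_map_equiv, e.symm_apply_apply]

lemma LinearEquiv.sub_mem_sup_smul_top_iff {J K : Ideal S}
    (e : (M ⧸ J • (⊤ : Submodule S M)) ≃ₗ[S] (N ⧸ K • (⊤ : Submodule S N))) (I : Ideal S)
    {x x' : M} {y y' : N} (hx : e (Submodule.Quotient.mk x) = Submodule.Quotient.mk y)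
    (hx' : e (Submodule.Quotient.mk x') = Submodule.Quotient.mk y') :
    x - x' ∈ (I ⊔ J) • (⊤ : Submodule S M) ↔ y - y' ∈ (I ⊔ K) • (⊤ : Submodule S N) := by
  rw [← Submodule.mk_mem_smul_top_iff, ← Submodule.mk_mem_smul_top_iff, Submodule.Quotient.mk_sub,
    Submodule.Quotient.mk_sub, ← hx, ← hx', ← map_sub, e.map_mem_smul_top_iff]

end SmulTop

section DescentData

variable (k : Type) [Field k] (m : ℕ) (S : Type) [CommRing S]
  [Algebra (SNCModel k (m + 1)) S]
variable (M : Fin (m + 1) → Type) [∀ i, AddCommGroup (M i)] [∀ i, Module S (M i)]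
variable (φ : ∀ i j : Fin (m + 1), i ≠ j →
  ((M i ⧸ xIdeal k (m + 1) S j • (⊤ : Submodule S (M i))) ≃ₗ[S]
    (M j ⧸ xIdeal k (m + 1) S i • (⊤ : Submodule S (M j)))))

/-- The cocycle condition `φ̄_{jl} ∘ φ̄_{ij} = φ̄_{il}`, stated on representatives. -/
def CocycleCondition : Prop :=
  ∀ (i j l : Fin (m + 1)) (hij : i ≠ j) (hjl : j ≠ l) (hil : i ≠ l) (x : M i) (y : M j),
    φ i j hij (Submodule.Quotient.mk x) = Submodule.Quotient.mk y →
    qfactor (Submodule.smul_mono_left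
        (le_sup_left : xIdeal k (m + 1) S i ≤ xIdeal k (m + 1) S i ⊔ xIdeal k (m + 1) S j))
        (φ i l hil (Submodule.Quotient.mk x)) =
      qfactor (Submodule.smul_mono_left
        (le_sup_right : xIdeal k (m + 1) S j ≤ xIdeal k (m + 1) S i ⊔ xIdeal k (m + 1) S j))
        (φ j l hjl (Submodule.Quotient.mk y))

lemma glueMap_mk (i j : Fin (m + 1)) (h : i ≠ j) (l : Fin (m + 1)) (x : M i) :
    glueMap k m S M φ i j h l (Submodule.Quotient.mk x) =
      qfactor (Submodule.smul_mono_left le_sup_left) (φ i j h (Submodule.Quotient.mk x)) := rfl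

lemma psiTwo_bijective : Function.Bijective (psiTwo k m S M φ) :=
  (LinearEquiv.piCongrRight fun i : Fin m =>
    φ (Fin.last m) i.castSucc (Fin.castSucc_lt_last i).ne').bijective

lemma mem_psiTwoSource_iff (p : ∀ i : Fin m, M (Fin.last m) ⧸
      xIdeal k (m + 1) S i.castSucc • (⊤ : Submodule S (M (Fin.last m)))) :
    p ∈ psiTwoSource k m S M ↔ ∀ (i j : Fin m), i ≠ j →
      qfactor (Submodule.smul_mono_left le_sup_left) (p i) =
        qfactor (Submodule.smul_mono_left le_sup_right) (p j) := by
  simp only [psiTwoSource, Submodule.mem_iInf, LinearMap.mem_eqLocus, LinearMap.comp_apply,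
    LinearMap.proj_apply]

lemma mem_psiTwoTarget_iff (q : ∀ i : Fin m, M i.castSucc ⧸
      xIdeal k (m + 1) S (Fin.last m) • (⊤ : Submodule S (M i.castSucc))) :
    q ∈ psiTwoTarget k m S M φ ↔ ∀ (i j : Fin m) (h : i ≠ j),
      glueMap k m S M φ i.castSucc j.castSucc ((Fin.castSucc_injective m).ne h) (Fin.last m)
          (q i) =
        qfactor (Submodule.smul_mono_left le_sup_right) (q j) := by
  simp only [psiTwoTarget, Submodule.mem_iInf, LinearMap.mem_eqLocus, LinearMap.comp_apply,
    LinearMap.proj_apply]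

variable {k m S M φ}

lemma qfactor_eq_iff_glueMap_psiTwo_eq (hcoc : CocycleCondition k m S M φ)
    (p : ∀ i : Fin m, M (Fin.last m) ⧸
      xIdeal k (m + 1) S i.castSucc • (⊤ : Submodule S (M (Fin.last m))))
    {i j : Fin m} (hij : i ≠ j) :
    qfactor (Submodule.smul_mono_left le_sup_left) (p i) =
        qfactor (Submodule.smul_mono_left le_sup_right) (p j) ↔
      glueMap k m S M φ i.castSucc j.castSucc ((Fin.castSucc_injective m).ne hij) (Fin.last m)
          (psiTwo k m S M φ p i) =
        qfactor (Submodule.smul_mono_left le_sup_right) (psiTwo k m S M φ p j) := by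
  have hni := (Fin.castSucc_lt_last i).ne'
  have hnj := (Fin.castSucc_lt_last j).ne'
  have hij' := (Fin.castSucc_injective m).ne hij
  obtain ⟨xi, hxi⟩ := Submodule.Quotient.mk_surjective _ (p i)
  obtain ⟨xj, hxj⟩ := Submodule.Quotient.mk_surjective _ (p j)
  obtain ⟨yi, hyi⟩ := Submodule.Quotient.mk_surjective _ (psiTwo k m S M φ p i)
  obtain ⟨yj, hyj⟩ := Submodule.Quotient.mk_surjective _ (psiTwo k m S M φ p j)
  obtain ⟨z, hz⟩ := Submodule.Quotient.mk_surjective _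
    (φ i.castSucc j.castSucc hij' (Submodule.Quotient.mk yi))
  obtain ⟨w, hw⟩ := Submodule.Quotient.mk_surjective _
    (φ (Fin.last m) j.castSucc hnj (Submodule.Quotient.mk xi))
  have hcoc_nij : w - z ∈ (xIdeal k (m + 1) S i.castSucc ⊔ xIdeal k (m + 1) S (Fin.last m)) •
      (⊤ : Submodule S (M j.castSucc)) := by
    have h := hcoc (Fin.last m) i.castSucc j.castSucc hni hij' hnj xi yi (by rw [hxi, hyi]; rfl)
    rw [← hw, ← hz, qfactor_mk, qfactor_mk, Submodule.Quotient.eq] at h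
    rwa [sup_comm]
  have htransport := (φ (Fin.last m) j.castSucc hnj).sub_mem_sup_smul_top_iff
    (xIdeal k (m + 1) S i.castSucc) hw.symm (by rw [hxj, hyj]; rfl)
  rw [← hxi, ← hxj, ← hyi, ← hyj, glueMap_mk, ← hz, qfactor_mk, qfactor_mk, qfactor_mk,
    qfactor_mk, Submodule.Quotient.eq, Submodule.Quotient.eq, htransport,
    ← sub_add_sub_cancel w z yj, Submodule.add_mem_iff_right _ hcoc_nij]

lemma mem_psiTwoSource_iff_psiTwo_mem_psiTwoTarget (hcoc : CocycleCondition k m S M φ)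
    (p : ∀ i : Fin m, M (Fin.last m) ⧸
      xIdeal k (m + 1) S i.castSucc • (⊤ : Submodule S (M (Fin.last m)))) :
    p ∈ psiTwoSource k m S M ↔ psiTwo k m S M φ p ∈ psiTwoTarget k m S M φ := by
  rw [mem_psiTwoSource_iff, mem_psiTwoTarget_iff]
  exact forall₂_congr fun i j => forall_congr' fun hij =>
    qfactor_eq_iff_glueMap_psiTwo_eq hcoc p hij

end DescentData

theorem statement5_general (k : Type) [Field k] (m : ℕ)
    (S : Type) [CommRing S] [Algebra (SNCModel k (m + 1)) S]
    (M : Fin (m + 1) → Type) [∀ i, AddCommGroup (M i)] [∀ i, Module S (M i)]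
    (φ : ∀ i j : Fin (m + 1), i ≠ j →
      ((M i ⧸ xIdeal k (m + 1) S j • (⊤ : Submodule S (M i))) ≃ₗ[S]
        (M j ⧸ xIdeal k (m + 1) S i • (⊤ : Submodule S (M j)))))
    (hcoc : ∀ (i j l : Fin (m + 1)) (hij : i ≠ j) (hjl : j ≠ l) (hil : i ≠ l)
      (x : M i) (y : M j),
      φ i j hij (Submodule.Quotient.mk x) = Submodule.Quotient.mk y →
      qfactor (Submodule.smul_mono_left
          (le_sup_left : xIdeal k (m + 1) S i ≤ xIdeal k (m + 1) S i ⊔ xIdeal k (m + 1) S j))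
          (φ i l hil (Submodule.Quotient.mk x)) =
        qfactor (Submodule.smul_mono_left
          (le_sup_right : xIdeal k (m + 1) S j ≤ xIdeal k (m + 1) S i ⊔ xIdeal k (m + 1) S j))
          (φ j l hjl (Submodule.Quotient.mk y))) :
    Set.BijOn (psiTwo k m S M φ) (psiTwoSource k m S M) (psiTwoTarget k m S M φ) := by
  have hsource : (psiTwoSource k m S M : Set _) = psiTwo k m S M φ ⁻¹' psiTwoTarget k m S M φ :=
    Set.ext (mem_psiTwoSource_iff_psiTwo_mem_psiTwoTarget hcoc)
  rw [hsource]
  exact (psiTwo_bijective k m S M φ).bijOn_preimage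

/-- the product of the maps `φ_{ni}` restricts to a bijection (hence an
`S`-linear isomorphism) between the submodule of compatible tuples in `∏_{i<n} Mₙ/(IᵢMₙ)`
and the submodule of `φ`-compatible tuples in `∏_{i<n} Mᵢ/(IₙMᵢ)`. -/
theorem statement5 (k : Type) [Field k] (m : ℕ) (hm : 1 ≤ m)
    (S : Type) [CommRing S] [Algebra (SNCModel k (m + 1)) S]
    [Module.Flat (SNCModel k (m + 1)) S]
    (M : Fin (m + 1) → Type) [∀ i, AddCommGroup (M i)] [∀ i, Module S (M i)]
    [∀ i, Module (S ⧸ xIdeal k (m + 1) S i) (M i)]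
    [∀ i, IsScalarTower S (S ⧸ xIdeal k (m + 1) S i) (M i)]
    [∀ i, Module.Finite (S ⧸ xIdeal k (m + 1) S i) (M i)]
    [∀ i, Module.Projective (S ⧸ xIdeal k (m + 1) S i) (M i)]
    (φ : ∀ i j : Fin (m + 1), i ≠ j →
      ((M i ⧸ xIdeal k (m + 1) S j • (⊤ : Submodule S (M i))) ≃ₗ[S]
        (M j ⧸ xIdeal k (m + 1) S i • (⊤ : Submodule S (M j)))))
    (hsymm : ∀ (i j : Fin (m + 1)) (h : i ≠ j), φ j i h.symm = (φ i j h).symm)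
    (hcoc : ∀ (i j l : Fin (m + 1)) (hij : i ≠ j) (hjl : j ≠ l) (hil : i ≠ l)
      (x : M i) (y : M j),
      φ i j hij (Submodule.Quotient.mk x) = Submodule.Quotient.mk y →
      qfactor (Submodule.smul_mono_left
          (le_sup_left : xIdeal k (m + 1) S i ≤ xIdeal k (m + 1) S i ⊔ xIdeal k (m + 1) S j))
          (φ i l hil (Submodule.Quotient.mk x)) =
        qfactor (Submodule.smul_mono_left
          (le_sup_right : xIdeal k (m + 1) S j ≤ xIdeal k (m + 1) S i ⊔ xIdeal k (m + 1) S j))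
          (φ j l hjl (Submodule.Quotient.mk y))) :
    Set.BijOn (psiTwo k m S M φ) (psiTwoSource k m S M) (psiTwoTarget k m S M φ) :=
  statement5_general k m S M φ hcoc
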